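/- arXiv:1512.01717 — 4 statements merged into one kernel-verified Lean document; each statement's English description precedes it below -/
import Mathlib

section
/- If G is a group of exponent a power of 2 (every element has order a power of 2) and h ∈ G satisfies h² = 1, then for every g ∈ G there exists c such that the iterated commutator E_c(g,h) = [...[[g,h],h],...,h] (with c copies of h) equals 1. -/
/-- The iterated Engel commutator: `engel g h 0 = g`,
`engel g h (c+1) = [engel g h c, h]` with `[x,y] = x⁻¹y⁻¹xy`. -/
def engel {G : Type*} [Group G] (g h : G) : ℕ → G
  | 0 => g
  | c + 1 => (engel g h c)⁻¹ * h⁻¹ * engel g h c * h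

/-- If every element of `G` has order a power of 2 and `h² = 1`, then for every `g`
some iterated Engel commutator `E_c(g,h)` is trivial. -/
theorem stmt_0 {G : Type*} [Group G]
    (htor : ∀ x : G, ∃ k : ℕ, x ^ (2 ^ k) = 1)
    (h : G) (hh : h ^ 2 = 1) :
    ∀ g : G, ∃ c : ℕ, engel g h c = 1 := by
  intro g
  have hinv : h⁻¹ = h := by
    rw [inv_eq_iff_mul_eq_one, ← sq, hh]
  set t : G := g⁻¹ * h⁻¹ * g * h with ht
  have hh2 : h * h = 1 := by rw [← sq]; exact hh
  have hconj : h⁻¹ * t * h = t⁻¹ := by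
    rw [ht, hinv]
    simp [mul_inv_rev, inv_inv, hinv, mul_assoc, hh2]
  have hconjn : ∀ e : ℤ, h⁻¹ * t ^ e * h = t ^ (-e) := by
    intro e
    have : h⁻¹ * t ^ e * h = (h⁻¹ * t * h) ^ e := by
      rw [← hinv]
      simp [conj_zpow]
    rw [this, hconj, inv_zpow, ← zpow_neg]
  have key : ∀ j : ℕ, engel g h (j + 1) = t ^ ((-2 : ℤ) ^ j) := by
    intro j
    induction j with
    | zero => simp [engel, ht]
    | succ n ih =>
      have hstep : engel g h (n + 2) =
          (engel g h (n + 1))⁻¹ * h⁻¹ * engel g h (n + 1) * h := rfl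
      rw [hstep, ih, mul_assoc, mul_assoc, ← mul_assoc h⁻¹, hconjn,
        ← zpow_neg, ← zpow_add, pow_succ]
      ring_nf
  obtain ⟨k, hk⟩ := htor t
  refine ⟨k + 1, ?_⟩
  rw [key k]
  have h1 : ((-2 : ℤ)) ^ k = (2 : ℤ) ^ k * (-1) ^ k := by
    rw [neg_pow]; ring
  rw [h1, zpow_mul]
  have h2 : t ^ ((2 : ℤ) ^ k) = 1 := by
    have : ((2 : ℤ) ^ k) = ((2 ^ k : ℕ) : ℤ) := by push_cast; ring
    rw [this, zpow_natCast, hk]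
  rw [h2, one_zpow]
end

section
/- In any group, if h² = 1 then for all g and all k ≥ 0, E_{1+k}(g,h) = [g,h]^((-2)^k), where E_c denotes the c-fold iterated commutator with h. -/
/-- If `h² = 1` then `E_{1+k}(g,h) = [g,h]^((-2)^k)`. -/
theorem stmt_1 {G : Type*} [Group G] (g h : G) (hh : h ^ 2 = 1) (k : ℕ) :
    engel g h (1 + k) = (g⁻¹ * h⁻¹ * g * h) ^ ((-2 : ℤ) ^ k) := by
  have hmul : h * h = 1 := by rw [← pow_two]; exact hh
  have hinv : h⁻¹ = h := inv_eq_of_mul_eq_one_right hmul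
  set c := g⁻¹ * h⁻¹ * g * h with hc
  have hconj : h⁻¹ * c * h⁻¹⁻¹ = c⁻¹ := by
    simp only [hc, hinv, inv_inv, mul_inv_rev]
    simp [mul_assoc, hmul]
  have hconjn : ∀ n : ℤ, h⁻¹ * c ^ n * h = c ^ (-n) := by
    intro n
    calc h⁻¹ * c ^ n * h = h⁻¹ * c ^ n * h⁻¹⁻¹ := by rw [inv_inv]
      _ = (h⁻¹ * c * h⁻¹⁻¹) ^ n := (conj_zpow ..).symm
      _ = c ^ (-n) := by rw [hconj, inv_zpow, ← zpow_neg]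
  induction k with
  | zero =>
    show (engel g h 0)⁻¹ * h⁻¹ * engel g h 0 * h = _
    simp [engel, hc]
  | succ k ih =>
    have h1 : engel g h (1 + (k + 1)) =
        (engel g h (1 + k))⁻¹ * h⁻¹ * engel g h (1 + k) * h := by
      rw [show 1 + (k + 1) = (1 + k) + 1 by ring]; rfl
    rw [h1, ih, ← zpow_neg, mul_assoc, mul_assoc, ← mul_assoc h⁻¹, hconjn,
      ← zpow_add, show (-2 : ℤ) ^ (k + 1) = -(-2:ℤ)^k + -(-2:ℤ)^k by ring]
end

section
/- Let G act self-similarly on X*, and for v ∈ X* and g ∈ G define v*g as the permutation of X* given by (v·w)^{v*g} = v·(w^g) and u^{v*g} = u if u does not start with v. Then (v*g)^h = (v^h)*(g^{h@v}) for all h ∈ G, where conjugation is in the full permutation group of X*. -/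
/-- Let `P` be a group of permutations of `X*` (given by a faithful right action `act`),
`h ∈ P` with states `sth u = h@u` satisfying `(u·w)^h = (u^h)·(w^{h@u})`, and let
`vg = v*g` be the permutation acting as `g` on the subtree at `v` and trivially elsewhere.
Then the conjugate `(v*g)^h = h⁻¹·(v*g)·h` equals `(v^h)*(g^{h@v})`, i.e. it acts as
`g^{h@v} = (h@v)⁻¹·g·(h@v)` on the subtree at `v^h` and trivially elsewhere. -/
theorem stmt_10 {X P : Type*} [Group P]
    (act : List X → P → List X)
    (hact_one : ∀ v, act v 1 = v)
    (hact_mul : ∀ (v : List X) (g k : P), act (act v g) k = act v (g * k))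
    (hfaith : ∀ g k : P, (∀ v, act v g = act v k) → g = k)
    (h : P) (sth : List X → P)
    (hsth : ∀ u w : List X, act (u ++ w) h = act u h ++ act w (sth u))
    (v : List X) (g vg : P)
    (hvg₁ : ∀ w : List X, act (v ++ w) vg = v ++ act w g)
    (hvg₂ : ∀ u : List X, ¬ v <+: u → act u vg = u) :
    (∀ w : List X,
        act (act v h ++ w) (h⁻¹ * vg * h) = act v h ++ act w ((sth v)⁻¹ * g * sth v)) ∧
      (∀ u : List X, ¬ act v h <+: u → act u (h⁻¹ * vg * h) = u) := by
  have cancel : ∀ (u : List X) (k : P), act (act u k) k⁻¹ = u := by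
    intro u k; rw [hact_mul, mul_inv_cancel, hact_one]
  have inv_act : ∀ (u : List X) (k : P), act u k⁻¹ = u ↔ act u k = u := by
    intro u k
    constructor
    · intro e
      conv_lhs => rw [← e]
      rw [hact_mul, inv_mul_cancel, hact_one]
    · intro e
      conv_lhs => rw [← e, cancel]
  have key : ∀ u : List X, act u (h⁻¹ * vg * h) = act (act (act u h⁻¹) vg) h := by
    intro u; rw [hact_mul, hact_mul, mul_assoc]
  constructor
  · intro w
    have e1 : act v h ++ w = act (v ++ act w (sth v)⁻¹) h := by
      rw [hsth, hact_mul, inv_mul_cancel, hact_one]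
    rw [key, e1, cancel, hvg₁, hsth, hact_mul, hact_mul]
    rw [mul_assoc]
  · intro u hu
    rw [key]
    have hnp : ¬ v <+: act u h⁻¹ := by
      intro ⟨w', hw'⟩
      apply hu
      have : u = act (v ++ w') h := by
        rw [hw', hact_mul, inv_mul_cancel, hact_one]
      rw [this, hsth]
      exact ⟨_, rfl⟩
    rw [hvg₂ _ hnp, hact_mul, inv_mul_cancel, hact_one]
end

section
/- Let h ∈ G have finite order m acting on X*, {v₁,...,v_m} an orbit with v_i^h = v_{i-1}, h_i = (h@v₁)⁻¹···(h@v_i)⁻¹, and let k₁,...,k_m be permutations of X*. Set g = ∏_{i=1}^m (v_i * k_i^{h_i}). Then [g,h] = ∏_{i=1}^m (v_i * (k_i⁻¹k_{i+1})^{h_i}), indices mod m. -/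
/-- `Hfun st h v i = h_i = (h@v₁)⁻¹ ⋯ (h@v_i)⁻¹`. -/
def Hfun {X P : Type*} [Group P] (st : P → List X → P) (h : P) (v : ℕ → List X)
    (i : ℕ) : P :=
  ((List.range i).map fun j => (st h (v (j + 1)))⁻¹).prod

section Aux

variable {X : Type*} {P : Type*} [Group P]

lemma aux_not_prefix {u u' : List X} (hlen : u.length = u'.length) (hne : u' ≠ u)
    (s : List X) : ¬ u' <+: u ++ s := by
  intro hp
  apply hne
  have h1 : u' = (u ++ s).take u'.length := List.prefix_iff_eq_take.mp hp
  rw [h1, ← hlen, List.take_left]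

lemma aux_conj_list_prod (p : P) (l : List P) :
    p⁻¹ * l.prod * p = (l.map fun x => p⁻¹ * x * p).prod := by
  induction l with
  | nil => simp
  | cons a l ih =>
    simp only [List.prod_cons, List.map_cons]
    rw [← ih]; group

lemma aux_prod_inv (x : ℕ → P) (m : ℕ)
    (hc : ∀ i j, i < m → j < m → Commute (x i) (x j)) :
    (((List.range m).map x).prod)⁻¹ = ((List.range m).map fun i => (x i)⁻¹).prod := by
  induction m with
  | zero => simp
  | succ n ih =>
    rw [List.range_succ, List.map_append, List.map_append, List.prod_append,
      List.prod_append]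
    simp only [List.map_cons, List.map_nil, List.prod_cons, List.prod_nil, mul_one]
    rw [mul_inv_rev, ih (fun i j hi hj =>
      hc i j (hi.trans n.lt_succ_self) (hj.trans n.lt_succ_self))]
    have hcm : Commute ((x n)⁻¹) (((List.range n).map fun i => (x i)⁻¹).prod) := by
      apply Commute.list_prod_right
      intro y hy
      rcases List.mem_map.1 hy with ⟨j, hj, rfl⟩
      exact (hc n j n.lt_succ_self ((List.mem_range.1 hj).trans n.lt_succ_self)).inv_inv
    rw [hcm.eq]

lemma aux_prod_mul_prod (x y : ℕ → P) (m : ℕ)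
    (hc : ∀ i j, i < m → j < m → i ≠ j → Commute (x i) (y j)) :
    ((List.range m).map x).prod * ((List.range m).map y).prod
      = ((List.range m).map fun i => x i * y i).prod := by
  induction m with
  | zero => simp
  | succ n ih =>
    rw [List.range_succ]
    simp only [List.map_append, List.prod_append, List.map_cons, List.map_nil,
      List.prod_cons, List.prod_nil, mul_one]
    have hcm : Commute (x n) (((List.range n).map y).prod) := by
      apply Commute.list_prod_right
      intro z hz
      rcases List.mem_map.1 hz with ⟨j, hj, rfl⟩
      exact hc n j n.lt_succ_self ((List.mem_range.1 hj).trans n.lt_succ_self)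
        (Nat.ne_of_gt (List.mem_range.1 hj))
    calc ((List.range n).map x).prod * x n * (((List.range n).map y).prod * y n)
        = ((List.range n).map x).prod * (x n * ((List.range n).map y).prod) * y n := by
          group
      _ = ((List.range n).map x).prod * (((List.range n).map y).prod * x n) * y n := by
          rw [hcm.eq]
      _ = (((List.range n).map x).prod * ((List.range n).map y).prod) * (x n * y n) := by
          group
      _ = ((List.range n).map fun i => x i * y i).prod * (x n * y n) := by
          rw [ih (fun i j hi hj hij =>
            hc i j (hi.trans n.lt_succ_self) (hj.trans n.lt_succ_self) hij)]

lemma aux_prod_rotate (f : ℕ → P) (n : ℕ) (hf : f 0 = f (n + 1))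
    (hc : ∀ j, 0 < j → j < n + 1 → Commute (f 0) (f j)) :
    ((List.range (n + 1)).map f).prod = ((List.range (n + 1)).map fun i => f (i + 1)).prod := by
  conv_lhs => rw [List.range_succ_eq_map]
  rw [List.map_cons, List.prod_cons, List.map_map]
  conv_rhs => rw [List.range_succ]
  simp only [List.map_append, List.prod_append, List.map_cons, List.map_nil,
    List.prod_cons, List.prod_nil, mul_one]
  have hcm : Commute (f 0) (((List.range n).map (f ∘ Nat.succ)).prod) := by
    apply Commute.list_prod_right
    intro z hz
    rcases List.mem_map.1 hz with ⟨j, hj, rfl⟩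
    exact hc (j + 1) j.succ_pos (Nat.succ_lt_succ (List.mem_range.1 hj))
  rw [hcm.eq, hf]
  rfl

end Aux

/-- Let `h` have finite order `m` acting self-similarly on `X*`, `{v₁,…,v_m}` an orbit
with `v_i^h = v_{i-1}`, `h_i = (h@v₁)⁻¹⋯(h@v_i)⁻¹`, and `k₁,…,k_m` permutations of `X*`
(extended periodically mod `m`).  With `star w x = w*x` the permutation acting as `x` on
the subtree at `w` and trivially elsewhere, set `g = ∏_{i=1}^m v_i*(k_i^{h_i})`.  Then
`[g,h] = ∏_{i=1}^m v_i*((k_i⁻¹k_{i+1})^{h_i})`, indices mod `m`. -/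
theorem stmt_14 {X P : Type*} [Group P]
    (act : List X → P → List X)
    (hact_one : ∀ w, act w 1 = w)
    (hact_mul : ∀ (w : List X) (g k : P), act (act w g) k = act w (g * k))
    (hfaith : ∀ g k : P, (∀ w, act w g = act w k) → g = k)
    (st : P → List X → P)
    (hst : ∀ (g : P) (u w : List X), act (u ++ w) g = act u g ++ act w (st g u))
    (star : List X → P → P)
    (hstar₁ : ∀ (u : List X) (x : P) (w : List X), act (u ++ w) (star u x) = u ++ act w x)
    (hstar₂ : ∀ (u : List X) (x : P) (w : List X), ¬ u <+: w → act w (star u x) = w)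
    (h : P) (m : ℕ) (hm : 1 ≤ m) (hord : h ^ m = 1)
    (v : ℕ → List X)
    (hvlen : ∀ i j, (v i).length = (v j).length)
    (hvdist : ∀ i j, i < m → j < m → i ≠ j → v (i + 1) ≠ v (j + 1))
    (hvper : ∀ i, v (i + m) = v i)
    (horb : ∀ i, act (v (i + 1)) h = v i)
    (k : ℕ → P) (hkper : ∀ i, k (i + m) = k i)
    (g : P)
    (hg : g = ((List.range m).map fun i =>
        star (v (i + 1)) ((Hfun st h v (i + 1))⁻¹ * k (i + 1) * Hfun st h v (i + 1))).prod) :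
    g⁻¹ * h⁻¹ * g * h = ((List.range m).map fun i =>
        star (v (i + 1))
          ((Hfun st h v (i + 1))⁻¹ * ((k (i + 1))⁻¹ * k (i + 2)) * Hfun st h v (i + 1))).prod := by
  -- basic consequences of the action axioms
  have act_back : ∀ (w : List X) (p : P), act (act w p) p⁻¹ = w := by
    intro w p; rw [hact_mul, mul_inv_cancel, hact_one]
  have act_back' : ∀ (w : List X) (p : P), act (act w p⁻¹) p = w := by
    intro w p; rw [hact_mul, inv_mul_cancel, hact_one]
  have st_one : ∀ u : List X, st 1 u = 1 := by
    intro u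
    apply hfaith; intro w
    have h1 := hst 1 u w
    rw [hact_one, hact_one] at h1
    rw [hact_one]
    exact (List.append_cancel_left h1).symm
  have st_mul : ∀ (g₁ k₁ : P) (u : List X),
      st (g₁ * k₁) u = st g₁ u * st k₁ (act u g₁) := by
    intro g₁ k₁ u
    apply hfaith; intro w
    have h1 := hst (g₁ * k₁) u w
    have h2 : act (u ++ w) (g₁ * k₁)
        = act u (g₁ * k₁) ++ act w (st g₁ u * st k₁ (act u g₁)) := by
      rw [← hact_mul, hst g₁ u w, hst k₁ (act u g₁) (act w (st g₁ u)), hact_mul, hact_mul]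
    exact List.append_cancel_left (h1.symm.trans h2)
  have pref_act : ∀ (u w : List X) (p : P), u <+: w → act u p <+: act w p := by
    rintro u w p ⟨t, rfl⟩
    rw [hst]
    exact ⟨_, rfl⟩
  have pref_iff : ∀ (u w : List X) (p : P), act u p <+: w ↔ u <+: act w p⁻¹ := by
    intro u w p
    constructor
    · intro hp
      have := pref_act _ _ p⁻¹ hp
      rwa [act_back] at this
    · intro hp
      have := pref_act _ _ p hp
      rwa [act_back'] at this
  -- star is a homomorphism in its second argument
  have star_mul : ∀ (u : List X) (x y : P), star u (x * y) = star u x * star u y := by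
    intro u x y
    apply hfaith; intro w
    rw [← hact_mul]
    by_cases hp : u <+: w
    · obtain ⟨t, rfl⟩ := hp
      rw [hstar₁, hstar₁, hstar₁, hact_mul]
    · rw [hstar₂ u _ w hp, hstar₂ u x w hp, hstar₂ u y w hp]
  have star_one : ∀ u : List X, star u (1 : P) = 1 := by
    intro u
    apply hfaith; intro w
    by_cases hp : u <+: w
    · obtain ⟨t, rfl⟩ := hp
      rw [hstar₁, hact_one, hact_one]
    · rw [hstar₂ u _ w hp, hact_one]
  have star_inv : ∀ (u : List X) (x : P), star u x⁻¹ = (star u x)⁻¹ := by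
    intro u x
    have : star u x⁻¹ * star u x = 1 := by rw [← star_mul, inv_mul_cancel, star_one]
    exact eq_inv_of_mul_eq_one_left this
  -- stars at distinct words of the same length commute
  have star_comm : ∀ (u u' : List X) (x y : P), u.length = u'.length → u ≠ u' →
      Commute (star u x) (star u' y) := by
    intro u u' x y hlen hne
    show star u x * star u' y = star u' y * star u x
    apply hfaith; intro w
    rw [← hact_mul, ← hact_mul]
    by_cases h1 : u <+: w
    · obtain ⟨t, rfl⟩ := h1
      rw [hstar₁, hstar₂ u' y _ (aux_not_prefix hlen (Ne.symm hne) _),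
        hstar₂ u' y _ (aux_not_prefix hlen (Ne.symm hne) _), hstar₁]
    · by_cases h2 : u' <+: w
      · obtain ⟨t, rfl⟩ := h2
        rw [hstar₁, hstar₂ u x _ (aux_not_prefix hlen.symm hne _),
          hstar₂ u x _ (aux_not_prefix hlen.symm hne _), hstar₁]
      · rw [hstar₂ u x w h1, hstar₂ u' y w h2, hstar₂ u x w h1]
  -- conjugation formula for stars
  have conj_star : ∀ (p : P) (u : List X) (x : P),
      p⁻¹ * star u x * p = star (act u p) ((st p u)⁻¹ * x * st p u) := by
    intro p u x
    apply hfaith; intro w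
    rw [← hact_mul, ← hact_mul]
    by_cases hp : u <+: act w p⁻¹
    · obtain ⟨t, ht⟩ := hp
      have hw : w = act u p ++ act t (st p u) := by
        rw [← hst, ht, act_back']
      rw [← ht, hstar₁, hst]
      conv_rhs => rw [hw, hstar₁]
      rw [hact_mul, hact_mul]
      have hx : st p u * ((st p u)⁻¹ * x * st p u) = x * st p u := by group
      rw [hx]
    · have hp2 : ¬ act u p <+: w := fun hc => hp ((pref_iff u w p).1 hc)
      rw [hstar₂ _ _ _ hp, hstar₂ _ _ _ hp2, act_back']
  -- facts about Hfun
  have Hfun_zero : Hfun st h v 0 = 1 := by simp [Hfun]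
  have Hfun_succ : ∀ i, Hfun st h v (i + 1) = Hfun st h v i * (st h (v (i + 1)))⁻¹ := by
    intro i
    simp [Hfun, List.range_succ]
  have st_pow : ∀ n, st (h ^ n) (v n) = (Hfun st h v n)⁻¹ := by
    intro n
    induction n with
    | zero => rw [pow_zero, st_one, Hfun_zero, inv_one]
    | succ n ih =>
      rw [pow_succ', st_mul h (h ^ n) (v (n + 1)), horb n, ih, Hfun_succ n,
        mul_inv_rev, inv_inv]
  have Hfun_m : Hfun st h v m = 1 := by
    have h1 := st_pow m
    rw [hord, st_one] at h1
    rw [← inv_inv (Hfun st h v m), ← h1, inv_one]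
  -- name the factors
  set A : ℕ → P := fun i =>
    star (v (i + 1)) ((Hfun st h v (i + 1))⁻¹ * k (i + 1) * Hfun st h v (i + 1)) with hA
  set B : ℕ → P := fun i =>
    star (v i) ((Hfun st h v i)⁻¹ * k (i + 1) * Hfun st h v i) with hB
  have hconjA : ∀ i, h⁻¹ * A i * h = B i := by
    intro i
    rw [hA, hB]
    simp only
    rw [conj_star h (v (i + 1)) _, horb i]
    congr 1
    have hc : st h (v (i + 1)) = (Hfun st h v (i + 1))⁻¹ * Hfun st h v i := by
      rw [Hfun_succ]; group
    rw [hc]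
    group
  -- h⁻¹ g h as a product of B's
  have key1 : h⁻¹ * g * h = ((List.range m).map B).prod := by
    rw [hg, aux_conj_list_prod, List.map_map]
    congr 1
    apply List.map_congr_left
    intro i _
    exact hconjA i
  -- rotate the product of B's
  obtain ⟨n, rfl⟩ : ∃ n, m = n + 1 := ⟨m - 1, (Nat.succ_pred_eq_of_pos hm).symm⟩
  have hv0 : v (n + 1) = v 0 := by have := hvper 0; rwa [zero_add] at this
  have hk1 : k (n + 1 + 1) = k 1 := by have := hkper 1; rwa [add_comm 1 (n + 1)] at this
  have hB0 : B 0 = B (n + 1) := by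
    rw [hB]
    simp only
    rw [Hfun_zero, Hfun_m, hv0, hk1]
  have key2 : ((List.range (n + 1)).map B).prod
      = ((List.range (n + 1)).map fun i => B (i + 1)).prod := by
    apply aux_prod_rotate B n hB0
    intro j hj0 hjm
    obtain ⟨j', rfl⟩ : ∃ j', j = j' + 1 := ⟨j - 1, (Nat.succ_pred_eq_of_pos hj0).symm⟩
    rw [hB]
    simp only
    rw [← hv0]
    apply star_comm
    · exact hvlen _ _
    · exact hvdist n j' n.lt_succ_self
        ((Nat.lt_of_succ_lt_succ hjm).trans n.lt_succ_self)
        (Nat.lt_of_succ_lt_succ hjm).ne'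
  -- commutation of the A's
  have hAcomm : ∀ i j, i < n + 1 → j < n + 1 → i ≠ j → Commute (A i) (A j) := by
    intro i j hi hj hij
    rw [hA]
    simp only
    exact star_comm _ _ _ _ (hvlen _ _) (hvdist i j hi hj hij)
  have hABcomm : ∀ i j, i < n + 1 → j < n + 1 → i ≠ j →
      Commute ((A i)⁻¹) (B (j + 1)) := by
    intro i j hi hj hij
    rw [hA, hB]
    simp only
    exact (star_comm _ _ _ _ (hvlen _ _) (hvdist i j hi hj hij)).inv_left
  -- termwise combination
  have termwise : ∀ i, (A i)⁻¹ * B (i + 1)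
      = star (v (i + 1)) ((Hfun st h v (i + 1))⁻¹ * ((k (i + 1))⁻¹ * k (i + 2))
          * Hfun st h v (i + 1)) := by
    intro i
    rw [hA, hB]
    simp only
    rw [← star_inv, ← star_mul]
    congr 1
    group
  -- put everything together
  calc g⁻¹ * h⁻¹ * g * h
      = g⁻¹ * (h⁻¹ * g * h) := by group
    _ = (((List.range (n + 1)).map A).prod)⁻¹
          * ((List.range (n + 1)).map fun i => B (i + 1)).prod := by
        rw [key1, key2, hg]
    _ = ((List.range (n + 1)).map fun i => (A i)⁻¹).prod
          * ((List.range (n + 1)).map fun i => B (i + 1)).prod := by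
        rw [aux_prod_inv A (n + 1) (fun i j hi hj => by
          by_cases hij : i = j
          · exact hij ▸ Commute.refl _
          · exact hAcomm i j hi hj hij)]
    _ = ((List.range (n + 1)).map fun i => (A i)⁻¹ * B (i + 1)).prod :=
        aux_prod_mul_prod _ _ (n + 1) (fun i j hi hj hij => hABcomm i j hi hj hij)
    _ = ((List.range (n + 1)).map fun i =>
          star (v (i + 1)) ((Hfun st h v (i + 1))⁻¹ * ((k (i + 1))⁻¹ * k (i + 2))
            * Hfun st h v (i + 1))).prod := by
        apply congrArg List.prod
        apply List.map_congr_left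
        intro i _
        exact termwise i
end
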